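/- Suppose g11, g22, g33, g44 are the minimal-degree generators of the ideals C1 = Res(Res(C)), C2 = Tor(Res(C)), C3 = Res(Tor(C)), C4 = Tor(Tor(C)) of Z2[z]/(z^n-1) associated to an ideal C of R[z]/(z^n-1) with R = Z4[v]/(v^2). Then C1 ⊆ C3 and C1 ⊆ C4 and C2 ⊆ C4; equivalently, g33 divides g11, g44 divides g11, and g44 divides g22 in Z2[z]. -/

import Mathlib

open Polynomial

/-- The ring `R = Z₄[v]/(v²)`. -/
abbrev Rv : Type := Polynomial (ZMod 4) ⧸ Ideal.span {(X : Polynomial (ZMod 4)) ^ 2}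

noncomputable instance instCommRingRv : CommRing Rv := Ideal.Quotient.commRing _

/-- The image of `v` in `R`. -/
noncomputable def vR : Rv := Ideal.Quotient.mk _ X

/-- The embedding `Z₄ → R`. -/
noncomputable def ι4R : ZMod 4 →+* Rv :=
  (Ideal.Quotient.mk (Ideal.span {(X : Polynomial (ZMod 4)) ^ 2})).comp Polynomial.C

/-- `R[z]/(zⁿ - 1)`. -/
abbrev Rz (n : ℕ) : Type := Polynomial Rv ⧸ Ideal.span {(X : Polynomial Rv) ^ n - 1}

/-- `Z₄[z]/(zⁿ - 1)`. -/
abbrev Z4z (n : ℕ) : Type :=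
  Polynomial (ZMod 4) ⧸ Ideal.span {(X : Polynomial (ZMod 4)) ^ n - 1}

/-- `Z₂[z]/(zⁿ - 1)`. -/
abbrev Z2z (n : ℕ) : Type :=
  Polynomial (ZMod 2) ⧸ Ideal.span {(X : Polynomial (ZMod 2)) ^ n - 1}

/-- Projection `R[z] → R[z]/(zⁿ - 1)`. -/
noncomputable def πR (n : ℕ) : Polynomial Rv →+* Rz n := Ideal.Quotient.mk _

/-- Projection `Z₄[z] → Z₄[z]/(zⁿ - 1)`. -/
noncomputable def π4 (n : ℕ) : Polynomial (ZMod 4) →+* Z4z n := Ideal.Quotient.mk _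

/-- Projection `Z₂[z] → Z₂[z]/(zⁿ - 1)`. -/
noncomputable def π2 (n : ℕ) : Polynomial (ZMod 2) →+* Z2z n := Ideal.Quotient.mk _

/-- The image of `v` in `R[z]/(zⁿ - 1)`. -/
noncomputable def vz (n : ℕ) : Rz n := πR n (Polynomial.C vR)

/-- Reduction `Z₄ → Z₂`. -/
noncomputable def r42 : ZMod 4 →+* ZMod 2 := ZMod.castHom (show 2 ∣ 4 by norm_num) (ZMod 2)

/-- `Res(C)` of an ideal `C ⊆ R[z]/(zⁿ-1)`, as a subset of `Z₄[z]/(zⁿ-1)`: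
elements `a` with `a + k·b ∈ C` for some `b`, where `k = v`. -/
noncomputable def ResR (n : ℕ) (I : Ideal (Rz n)) : Set (Z4z n) :=
  {a | ∃ A : Polynomial (ZMod 4), π4 n A = a ∧
    ∃ b : Rz n, πR n (A.map ι4R) + vz n * b ∈ I}

/-- `Tor(C)` of an ideal `C ⊆ R[z]/(zⁿ-1)`: elements `a` with `k·a ∈ C`. -/
noncomputable def TorR (n : ℕ) (I : Ideal (Rz n)) : Set (Z4z n) :=
  {a | ∃ A : Polynomial (ZMod 4), π4 n A = a ∧ vz n * πR n (A.map ι4R) ∈ I}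

/-- `Res(D)` of a subset `D ⊆ Z₄[z]/(zⁿ-1)`, as a subset of `Z₂[z]/(zⁿ-1)`. -/
noncomputable def Res4 (n : ℕ) (D : Set (Z4z n)) : Set (Z2z n) :=
  {a | ∃ A B : Polynomial (ZMod 4),
    π2 n (A.map r42) = a ∧ π4 n A + 2 * π4 n B ∈ D}

/-- `Tor(D)` of a subset `D ⊆ Z₄[z]/(zⁿ-1)`. -/
noncomputable def Tor4 (n : ℕ) (D : Set (Z4z n)) : Set (Z2z n) :=
  {a | ∃ A : Polynomial (ZMod 4), π2 n (A.map r42) = a ∧ 2 * π4 n A ∈ D}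

/-
Since `v² = 0`, multiplying `a + v·b ∈ C` by `v` gives `v·a ∈ C`, so `Res(C) ⊆ Tor(C)`.
Both `Res` and `Tor` on `Z₄[z]/(zⁿ-1)` are monotone, and `2·(a + 2b) = 2a` shows
`Res(D) ⊆ Tor(D)` for every `D` closed under doubling, such as `Tor(C)`.
The divisibilities follow because `h ∣ zⁿ - 1` makes `(h)` the full preimage of its image in
`Z₂[z]/(zⁿ-1)`.
-/

theorem Ideal.dvd_of_mk_mem_span_mk {R : Type*} [CommRing R] {m g h : R} (hm : h ∣ m)
    (hg : Ideal.Quotient.mk (Ideal.span {m}) g ∈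
      Ideal.span {Ideal.Quotient.mk (Ideal.span {m}) h}) : h ∣ g := by
  rw [← Set.image_singleton, ← Ideal.map_span,
    Ideal.mem_quotient_iff_mem (Ideal.span_singleton_le_span_singleton.mpr hm)] at hg
  exact Ideal.mem_span_singleton.mp hg

theorem vz_mul_self (n : ℕ) : vz n * vz n = 0 := by
  have hv : vR * vR = 0 := by
    rw [vR, ← map_mul, Ideal.Quotient.eq_zero_iff_mem, ← sq]
    exact Ideal.subset_span rfl
  rw [vz, ← map_mul, ← Polynomial.C_mul, hv, Polynomial.C_0, map_zero]

theorem ResR_subset_TorR (n : ℕ) (I : Ideal (Rz n)) : ResR n I ⊆ TorR n I := by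
  rintro a ⟨A, rfl, b, hb⟩
  refine ⟨A, rfl, ?_⟩
  -- `rw [zero_mul]` fails in `Rz n`, whose ring structure is reached along two syntactically
  -- different instance paths; `linear_combination` only needs them to agree up to defeq.
  have hkill : vz n * (πR n (A.map ι4R) + vz n * b) = vz n * πR n (A.map ι4R) := by
    linear_combination b * vz_mul_self n
  exact hkill ▸ I.mul_mem_left (vz n) hb

theorem two_mul_mem_TorR (n : ℕ) (I : Ideal (Rz n)) {x : Z4z n} (hx : x ∈ TorR n I) :
    2 * x ∈ TorR n I := by
  obtain ⟨A, rfl, hA⟩ := hx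
  refine ⟨2 * A, by rw [map_mul, map_ofNat], ?_⟩
  have hdouble : vz n * πR n ((2 * A).map ι4R) = 2 * (vz n * πR n (A.map ι4R)) := by
    rw [Polynomial.map_mul, Polynomial.map_ofNat, map_mul, map_ofNat]
    ring
  exact hdouble ▸ I.mul_mem_left 2 hA

theorem Res4_mono (n : ℕ) {D E : Set (Z4z n)} (h : D ⊆ E) : Res4 n D ⊆ Res4 n E :=
  fun _ ⟨A, B, ha, hD⟩ => ⟨A, B, ha, h hD⟩

theorem Tor4_mono (n : ℕ) {D E : Set (Z4z n)} (h : D ⊆ E) : Tor4 n D ⊆ Tor4 n E :=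
  fun _ ⟨A, ha, hD⟩ => ⟨A, ha, h hD⟩

theorem two_mul_two_Z4z (n : ℕ) : (2 : Z4z n) * 2 = 0 := by
  have h4 : ((4 : ℕ) : Z4z n) = 0 := by
    rw [← map_natCast (π4 n), CharP.cast_eq_zero, map_zero]
  linear_combination h4

theorem Res4_subset_Tor4 (n : ℕ) {D : Set (Z4z n)} (hD : ∀ x ∈ D, 2 * x ∈ D) :
    Res4 n D ⊆ Tor4 n D := by
  rintro a ⟨A, B, ha, hAB⟩
  refine ⟨A, ha, ?_⟩
  have hkill : 2 * (π4 n A + 2 * π4 n B) = 2 * π4 n A := by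
    linear_combination π4 n B * two_mul_two_Z4z n
  exact hkill ▸ hD _ hAB

theorem stmt12_general (n : ℕ) (I : Ideal (Rz n))
    (g11 g22 g33 g44 : Polynomial (ZMod 2))
    (h33d : g33 ∣ X ^ n - 1) (h44d : g44 ∣ X ^ n - 1)
    (h1 : ((Ideal.span {π2 n g11} : Ideal (Z2z n)) : Set (Z2z n)) = Res4 n (ResR n I))
    (h2 : ((Ideal.span {π2 n g22} : Ideal (Z2z n)) : Set (Z2z n)) = Tor4 n (ResR n I))
    (h3 : ((Ideal.span {π2 n g33} : Ideal (Z2z n)) : Set (Z2z n)) = Res4 n (TorR n I))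
    (h4 : ((Ideal.span {π2 n g44} : Ideal (Z2z n)) : Set (Z2z n)) = Tor4 n (TorR n I)) :
    Res4 n (ResR n I) ⊆ Res4 n (TorR n I) ∧
    Res4 n (ResR n I) ⊆ Tor4 n (TorR n I) ∧
    Tor4 n (ResR n I) ⊆ Tor4 n (TorR n I) ∧
    g33 ∣ g11 ∧ g44 ∣ g11 ∧ g44 ∣ g22 := by
  have hResTor := ResR_subset_TorR n I
  have h13 := Res4_mono n hResTor
  have h14 := h13.trans (Res4_subset_Tor4 n fun _ => two_mul_mem_TorR n I)
  have h24 := Tor4_mono n hResTor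
  have hdvd {g h : Polynomial (ZMod 2)} (hh : h ∣ X ^ n - 1)
      (hgh : (Ideal.span {π2 n g} : Set (Z2z n)) ⊆ Ideal.span {π2 n h}) : h ∣ g :=
    Ideal.dvd_of_mk_mem_span_mk hh (hgh (Ideal.subset_span rfl))
  refine ⟨h13, h14, h24, hdvd h33d ?_, hdvd h44d ?_, hdvd h44d ?_⟩
  · rwa [h1, h3]
  · rwa [h1, h4]
  · rwa [h2, h4]

theorem stmt12 (n : ℕ) (hn : 0 < n) (I : Ideal (Rz n))
    (g11 g22 g33 g44 : Polynomial (ZMod 2))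
    (h11m : g11.Monic) (h22m : g22.Monic) (h33m : g33.Monic) (h44m : g44.Monic)
    (h11d : g11 ∣ X ^ n - 1) (h22d : g22 ∣ X ^ n - 1)
    (h33d : g33 ∣ X ^ n - 1) (h44d : g44 ∣ X ^ n - 1)
    (h1 : ((Ideal.span {π2 n g11} : Ideal (Z2z n)) : Set (Z2z n)) = Res4 n (ResR n I))
    (h2 : ((Ideal.span {π2 n g22} : Ideal (Z2z n)) : Set (Z2z n)) = Tor4 n (ResR n I))
    (h3 : ((Ideal.span {π2 n g33} : Ideal (Z2z n)) : Set (Z2z n)) = Res4 n (TorR n I))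
    (h4 : ((Ideal.span {π2 n g44} : Ideal (Z2z n)) : Set (Z2z n)) = Tor4 n (TorR n I)) :
    Res4 n (ResR n I) ⊆ Res4 n (TorR n I) ∧
    Res4 n (ResR n I) ⊆ Tor4 n (TorR n I) ∧
    Tor4 n (ResR n I) ⊆ Tor4 n (TorR n I) ∧
    g33 ∣ g11 ∧ g44 ∣ g11 ∧ g44 ∣ g22 :=
  stmt12_general n I g11 g22 g33 g44 h33d h44d h1 h2 h3 h4
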